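/- arXiv:2002.04579 — 3 statements merged into one kernel-verified Lean document; each statement's English description precedes it below -/
import Mathlib

section
/- For every nonnegative integer c and every graph H there exists a constant C = C(H, c) such that every c-degenerate graph on n vertices contains at most C·n^{α(H)} copies of H, where α(H) denotes the independence number of H. -/
open SimpleGraph

/-- A set of vertices is independent: pairwise nonadjacent. -/
def IsIndepSet {V : Type*} (G : SimpleGraph V) (s : Set V) : Prop :=
  s.Pairwise fun a b => ¬ G.Adj a b

/-- The independence number of a graph: the maximum size of an independent set. -/
noncomputable def indepNum {V : Type*} (G : SimpleGraph V) : ℕ :=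
  sSup {n | ∃ s : Finset V, _root_.IsIndepSet G (s : Set V) ∧ s.card = n}

/-- A graph is `c`-degenerate if every nonempty (finite) subgraph has a vertex of
degree at most `c` within it. -/
def Degenerate {V : Type*} (c : ℕ) (G : SimpleGraph V) : Prop :=
  ∀ s : Set V, s.Finite → s.Nonempty → ∃ v ∈ s, (s ∩ G.neighborSet v).ncard ≤ c

/-- The number of copies of `H` in `G`: the number of subgraphs of `G` isomorphic to `H`. -/
noncomputable def copyCount {V W : Type*} (H : SimpleGraph W) (G : SimpleGraph V) : ℕ :=
  {G' : G.Subgraph | Nonempty (G'.coe ≃g H)}.ncard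

/-- `G` contains no subgraph isomorphic to `H`. -/
def ContainsNoCopy {V W : Type*} (H : SimpleGraph W) (G : SimpleGraph V) : Prop :=
  ∀ G' : G.Subgraph, ¬ Nonempty (G'.coe ≃g H)

/-!
Order the vertices of a `c`-degenerate graph `G` so that each has at most `c` lower neighbours
(repeatedly remove a vertex of degree at most `c` and put it on top). For a copy `f` of `H`, the
vertices of `H` without a higher neighbour form an independent set, so there are at most `α(H)` of
them; every other vertex `a` has a higher neighbour `b`, and `f a` is one of at most `c` lower
neighbours of `f b`. Reading the images from the top down, `f` is determined by at most `α(H)`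
vertices of `G` and a bounded amount of further data.
-/

open Finset

lemma le_indepNum {W : Type*} [Fintype W] (H : SimpleGraph W) {s : Finset W}
    (hs : _root_.IsIndepSet H (s : Set W)) : #s ≤ _root_.indepNum H :=
  le_csSup ⟨Fintype.card W, by rintro n ⟨t, -, rfl⟩; exact card_le_univ t⟩ ⟨s, hs, rfl⟩

lemma indepNum_le_card {W : Type*} [Fintype W] (H : SimpleGraph W) :
    _root_.indepNum H ≤ Fintype.card W :=
  csSup_le ⟨0, ∅, by simp [_root_.IsIndepSet], rfl⟩
    fun _ ⟨t, _, ht⟩ => ht ▸ card_le_univ t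

section DegeneracyRank

variable {V : Type*} {G : SimpleGraph V} {c : ℕ}

def lowerNeighborSet (G : SimpleGraph V) (r : V → ℕ) (v : V) : Set V :=
  {u | G.Adj v u ∧ r u < r v}

def IsDegeneracyRankOn (G : SimpleGraph V) (c : ℕ) (r : V → ℕ) (s : Set V) : Prop :=
  Set.InjOn r s ∧ ∀ v ∈ s, (s ∩ lowerNeighborSet G r v).ncard ≤ c

lemma IsDegeneracyRankOn.insert_top [DecidableEq V] {r : V → ℕ} {s : Set V} {v : V} {N : ℕ}
    (hr : IsDegeneracyRankOn G c r s) (hs : s.Finite) (hv : v ∉ s) (hN : ∀ u ∈ s, r u < N)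
    (hdeg : (insert v s ∩ G.neighborSet v).ncard ≤ c) :
    IsDegeneracyRankOn G c (Function.update r v N) (insert v s) := by
  have hagree : Set.EqOn (Function.update r v N) r s := fun u hu =>
    Function.update_of_ne (ne_of_mem_of_not_mem hu hv) _ _
  refine ⟨(Set.injOn_insert hv).2 ⟨hr.1.congr hagree.symm, ?_⟩, ?_⟩
  · rintro ⟨u, hu, hNu⟩
    rw [hagree hu, Function.update_self] at hNu
    exact (hN u hu).ne hNu
  rintro u (rfl | hu)
  · refine le_trans (Set.ncard_le_ncard ?_ ((hs.insert u).inter_of_left _)) hdeg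
    exact fun w ⟨hw, hadj, _⟩ => ⟨hw, hadj⟩
  · have hlower : insert v s ∩ lowerNeighborSet G (Function.update r v N) u =
        s ∩ lowerNeighborSet G r u := by
      ext w
      simp only [Set.mem_inter_iff, Set.mem_insert_iff, lowerNeighborSet, Set.mem_ofPred_eq]
      constructor
      · rintro ⟨rfl | hw, hadj, hlt⟩
        · rw [Function.update_self, hagree hu] at hlt
          exact absurd hlt (hN u hu).not_gt
        · rw [hagree hw, hagree hu] at hlt
          exact ⟨hw, hadj, hlt⟩
      · rintro ⟨hw, hadj, hlt⟩
        exact ⟨Or.inr hw, hadj, by rwa [hagree hw, hagree hu]⟩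
    rw [hlower]
    exact hr.2 u hu

lemma Degenerate.exists_isDegeneracyRankOn (hG : Degenerate c G) (s : Finset V) :
    ∃ r : V → ℕ, IsDegeneracyRankOn G c r s := by
  classical
  induction s using Finset.strongInduction with
  | _ s ih =>
    rcases s.eq_empty_or_nonempty with rfl | hne
    · exact ⟨fun _ => 0, by simp [IsDegeneracyRankOn]⟩
    obtain ⟨v, hv, hdeg⟩ := hG s s.finite_toSet (by exact_mod_cast hne)
    obtain ⟨r, hr⟩ := ih (s.erase v) (erase_ssubset hv)
    refine ⟨Function.update r v ((s.erase v).sup r + 1), ?_⟩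
    have hs : (s : Set V) = insert v ↑(s.erase v) := by rw [← coe_insert, insert_erase hv]
    rw [hs] at hdeg ⊢
    exact hr.insert_top (s.erase v).finite_toSet (by simp)
      (fun u hu => Nat.lt_succ_of_le (le_sup (f := r) hu)) hdeg

lemma Degenerate.exists_rank [Fintype V] (hG : Degenerate c G) :
    ∃ r : V → ℕ, Function.Injective r ∧ ∀ v, (lowerNeighborSet G r v).ncard ≤ c := by
  obtain ⟨r, hinj, hdeg⟩ := hG.exists_isDegeneracyRankOn univ
  rw [coe_univ] at hinj hdeg
  exact ⟨r, Set.injOn_univ.1 hinj, fun v => by simpa using hdeg v (Set.mem_univ v)⟩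

end DegeneracyRank

lemma Set.Finite.exists_injOn_fin {α : Type*} {s : Set α} {c : ℕ} (hs : s.Finite)
    (h : s.ncard ≤ c) : ∃ e : α → Fin (c + 1), Set.InjOn e s := by
  obtain ⟨e, -, he⟩ := hs.exists_injOn_of_encard_le (t := Set.univ) <| by
    rw [← hs.cast_ncard_eq, Set.encard_univ, ENat.card_eq_coe_fintype_card (α := Fin (c + 1)),
      Fintype.card_fin]
    exact_mod_cast h.trans c.le_succ
  exact ⟨e, he⟩

section Words

variable {ι α β : Type*} [Fintype ι] [DecidableEq ι] [Fintype α] [Fintype β]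

def leftExactlyOn (T : Finset ι) : Finset (ι → α ⊕ β) :=
  Fintype.piFinset fun i => if i ∈ T then univ.map .inl else univ.map .inr

lemma card_leftExactlyOn (T : Finset ι) :
    #(leftExactlyOn T : Finset (ι → α ⊕ β)) =
      Fintype.card α ^ #T * Fintype.card β ^ (Fintype.card ι - #T) := by
  simp [leftExactlyOn, apply_ite card, prod_ite, filter_not, card_sdiff]

end Words

namespace SimpleGraph.Copy

variable {V W : Type*} {G : SimpleGraph V} {H : SimpleGraph W} (r : V → ℕ)

def HasHigherNeighbor (f : Copy H G) (a : W) : Prop :=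
  ∃ b, H.Adj a b ∧ r (f a) < r (f b)

variable {r}

lemma isIndepSet_setOf_not_hasHigherNeighbor (hr : Function.Injective r) (f : Copy H G) :
    _root_.IsIndepSet H {a | ¬ f.HasHigherNeighbor r a} := by
  intro a ha b hb hab hadj
  rcases (hr.ne (f.injective.ne hab)).lt_or_gt with hlt | hlt
  · exact ha ⟨b, hadj, hlt⟩
  · exact hb ⟨a, hadj.symm, hlt⟩

lemma HasHigherNeighbor.mem_lowerNeighborSet {f : Copy H G} {a : W}
    (h : f.HasHigherNeighbor r a) : f a ∈ lowerNeighborSet G r (f h.choose) :=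
  ⟨(f.toHom.map_adj h.choose_spec.1).symm, h.choose_spec.2⟩

variable (r) {c : ℕ}

/-- Vertices of `H` without a higher neighbour are recorded by their image; any other vertex `a`
by a higher neighbour `b` and the code of `f a` among the lower neighbours of `f b`. -/
noncomputable def encode (code : V → V → Fin (c + 1)) (f : Copy H G) (a : W) :
    V ⊕ W × Fin (c + 1) := by
  classical
  exact if h : f.HasHigherNeighbor r a then .inr (h.choose, code (f h.choose) (f a))
    else .inl (f a)

variable {r}

lemma encode_injective [Fintype W] {code : V → V → Fin (c + 1)}
    (hcode : ∀ v, Set.InjOn (code v) (lowerNeighborSet G r v)) :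
    Function.Injective (encode r code : Copy H G → _) := by
  classical
  intro f g hfg
  by_contra hne
  obtain ⟨a, ha, hmax⟩ := (univ.filter fun a => f a ≠ g a).exists_max_image (fun a => r (f a))
    (by simpa [filter_nonempty_iff] using mt Copy.ext hne)
  simp only [mem_filter, mem_univ, true_and] at ha hmax
  -- `a` is a highest vertex on which `f` and `g` disagree
  have hfga := congrFun hfg a
  by_cases hf : f.HasHigherNeighbor r a <;> by_cases hg : g.HasHigherNeighbor r a <;>
    simp only [encode, hf, hg, dif_pos, dif_neg, not_false_eq_true, Sum.inr.injEq, Sum.inl.injEq,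
      Prod.mk.injEq, reduceCtorEq] at hfga
  · obtain ⟨hb, hcodes⟩ := hfga
    have hfb : f hf.choose = g hf.choose :=
      not_not.1 fun h => (hmax _ h).not_gt hf.choose_spec.2
    have hga := hg.mem_lowerNeighborSet
    rw [← hb, ← hfb] at hga hcodes
    exact ha (hcode _ hf.mem_lowerNeighborSet hga hcodes)
  · exact ha hfga

open Classical in
lemma encode_mem_leftExactlyOn [Fintype W] [Fintype V] (code : V → V → Fin (c + 1))
    (f : Copy H G) :
    encode r code f ∈ leftExactlyOn (univ.filter fun a => ¬ f.HasHigherNeighbor r a) := by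
  refine Fintype.mem_piFinset.2 fun a => ?_
  by_cases hf : f.HasHigherNeighbor r a <;> simp [encode, hf]

end SimpleGraph.Copy

lemma copyCount_eq_simpleGraph_copyCount {V W : Type*} [Fintype V] {G : SimpleGraph V}
    {H : SimpleGraph W} : _root_.copyCount H G = G.copyCount H := by
  classical
  rw [SimpleGraph.copyCount, _root_.copyCount, ← Set.ncard_coe_finset]
  congr 1
  ext G'
  simpa using ⟨fun ⟨e⟩ => ⟨e.symm⟩, fun ⟨e⟩ => ⟨e.symm⟩⟩

section Counting

variable {V W : Type*} [Fintype V] [Fintype W] {G : SimpleGraph V} {H : SimpleGraph W} {c : ℕ}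

lemma labelledCopyCount_le_of_rank {r : V → ℕ} (hr : Function.Injective r)
    (hlow : ∀ v, (lowerNeighborSet G r v).ncard ≤ c) :
    G.labelledCopyCount H ≤
      2 ^ Fintype.card W * (Fintype.card W * (c + 1)) ^ Fintype.card W *
        Fintype.card V ^ _root_.indepNum H := by
  classical
  rcases isEmpty_or_nonempty W with hW | hW
  · have hα : _root_.indepNum H = 0 := by simpa using indepNum_le_card H
    simp [hα]
  rcases isEmpty_or_nonempty V with hV | hV
  · rw [labelledCopyCount_eq_zero.2 fun ⟨f⟩ => isEmptyElim (f hW.some)]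
    exact Nat.zero_le _
  choose code hcode using fun v =>
    (Set.toFinite (lowerNeighborSet G r v)).exists_injOn_fin (hlow v)
  set k := Fintype.card W
  set n := Fintype.card V
  set α := _root_.indepNum H
  set patterns := univ.filter fun T : Finset W => #T ≤ α
  have hcover : (univ : Finset (Copy H G)).image (Copy.encode r code) ⊆
      patterns.biUnion leftExactlyOn := by
    simp only [subset_iff, mem_image, mem_univ, true_and, mem_biUnion, mem_filter, patterns]
    rintro _ ⟨f, rfl⟩
    refine ⟨_, le_indepNum H ?_, Copy.encode_mem_leftExactlyOn code f⟩
    simpa using f.isIndepSet_setOf_not_hasHigherNeighbor hr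
  calc G.labelledCopyCount H = #(univ.image (Copy.encode r code)) := by
        rw [labelledCopyCount, card_image_of_injective _ (Copy.encode_injective hcode), card_univ]
    _ ≤ ∑ T ∈ patterns, #(leftExactlyOn T : Finset (W → V ⊕ W × Fin (c + 1))) :=
        (card_le_card hcover).trans card_biUnion_le
    _ ≤ ∑ T ∈ patterns, n ^ α * (k * (c + 1)) ^ k := by
        refine sum_le_sum fun T hT => ?_
        rw [card_leftExactlyOn, Fintype.card_prod, Fintype.card_fin]
        exact Nat.mul_le_mul (Nat.pow_le_pow_right Fintype.card_pos (mem_filter.1 hT).2)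
          (Nat.pow_le_pow_right (by positivity) (Nat.sub_le _ _))
    _ ≤ 2 ^ k * (k * (c + 1)) ^ k * n ^ α := by
        rw [sum_const, smul_eq_mul, mul_comm (n ^ α), ← mul_assoc]
        gcongr
        exact card_filter_le _ _ |>.trans (by simp [k])

end Counting

/-- For every `c` and every graph `H` there is a constant `C` such that every
`c`-degenerate graph on `n` vertices contains at most `C·n^α(H)` copies of `H`. -/
theorem stmt5 (c : ℕ) {W : Type} [Fintype W] (H : SimpleGraph W) :
    ∃ C : ℕ, ∀ (V : Type) [Fintype V] (G : SimpleGraph V), Degenerate c G →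
      _root_.copyCount H G ≤ C * Fintype.card V ^ _root_.indepNum H := by
  refine ⟨2 ^ Fintype.card W * (Fintype.card W * (c + 1)) ^ Fintype.card W, fun V _ G hG => ?_⟩
  obtain ⟨r, hr, hlow⟩ := hG.exists_rank
  rw [copyCount_eq_simpleGraph_copyCount]
  exact copyCount_le_labelledCopyCount.trans (labelledCopyCount_le_of_rank hr hlow)
end

section
/- For every ℓ ≥ 1 and every k with 1 ≤ k ≤ ℓ there exists a constant D = D(ℓ) such that in any graph G containing no even cycle of length at most 2ℓ, for any two vertices u, v the number of paths of length k from u to v is at most D. -/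
open SimpleGraph

/-! Fix a path `P` of length `k` from `u` to `v`. Any other such path `Q` meets `P` in a vertex
`w ≠ u, v`, for otherwise `P` followed by `Q` reversed is a cycle of length `2k`. Cutting `Q` at
`w` writes it as a path of length `j` followed by one of length `k - j` with `0 < j < k`, so by
induction on `k` the number of paths is at most `1 + (k + 1)(k - 1) D(k - 1)²`. -/

theorem Set.encard_image2_le {α β γ : Type*} (f : α → β → γ) (s : Set α) (t : Set β) :
    (Set.image2 f s t).encard ≤ s.encard * t.encard := by
  rw [← Set.image_uncurry_prod, ← Set.encard_prod]
  exact Set.encard_image_le _ _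

theorem ContainsNoCopy.free {V W : Type*} {G : SimpleGraph V} {H : SimpleGraph W}
    (hG : ContainsNoCopy H G) : H.Free G := by
  rw [Free, isContained_iff_exists_iso_subgraph]
  rintro ⟨G', ⟨e⟩⟩
  exact hG G' ⟨e.symm⟩

namespace SimpleGraph

variable {V : Type*} {G : SimpleGraph V} {u v : V}

theorem Walk.IsCycle.length_ne_two_mul {ℓ k : ℕ}
    (hG : ∀ j, 2 ≤ j → j ≤ ℓ → (cycleGraph (2 * j)).Free G) (hk : k ≤ ℓ)
    {x : V} {c : G.Walk x x} (hc : c.IsCycle) : c.length ≠ 2 * k := by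
  intro hlen
  have := hc.three_le_length
  exact hG k (by omega) hk ((cycleGraph_isContained_iff (by omega)).mpr ⟨x, c, hc, hlen⟩)

theorem Walk.IsPath.isCycle_append_reverse {p q : G.Walk u v} (hp : p.IsPath) (hq : q.IsPath)
    (hne : p ≠ q) (hpq : ∀ w ∈ p.support, w ∈ q.support → w = u ∨ w = v) :
    (p.append q.reverse).IsCycle := by
  refine hp.isCycle_append hq.reverse (fun w hwp hwq ↦ ?_) ?_
  · have hu := hp.support_nodup
    have hv := hq.reverse.support_nodup
    rw [← Walk.cons_tail_support, List.nodup_cons] at hu hv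
    rcases hpq w (List.mem_of_mem_tail hwp) (by simpa using List.mem_of_mem_tail hwq)
      with rfl | rfl
    · exact hu.1 hwp
    · exact hv.1 hwq
  · by_contra! h
    exact hne (Walk.eq_of_length_le_one (by omega) (by simpa using h.2))

def pathsOfLength (G : SimpleGraph V) (u v : V) (k : ℕ) : Set (G.Walk u v) :=
  {p | p.IsPath ∧ p.length = k}

theorem pathsOfLength_subset_insert [DecidableEq V] {k : ℕ} {P : G.Walk u v}
    (hP : P ∈ G.pathsOfLength u v k)
    (hG : ∀ (x : V) (c : G.Walk x x), c.IsCycle → c.length ≠ 2 * k) :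
    G.pathsOfLength u v k ⊆ insert P (⋃ w ∈ P.support.toFinset, ⋃ j ∈ Finset.Ioo 0 k,
      Set.image2 Walk.append (G.pathsOfLength u w j) (G.pathsOfLength w v (k - j))) := by
  intro Q hQ
  rcases eq_or_ne Q P with rfl | hQP
  · exact Set.mem_insert _ _
  obtain ⟨w, hwP, hwQ, hwu, hwv⟩ : ∃ w ∈ P.support, w ∈ Q.support ∧ w ≠ u ∧ w ≠ v := by
    by_contra! h
    refine hG u _ (hP.1.isCycle_append_reverse hQ.1 hQP.symm fun w hwP hwQ ↦ ?_) ?_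
    · by_contra! h'
      exact h'.2 (h w hwP hwQ h'.1)
    · rw [Walk.length_append, Walk.length_reverse, hP.2, hQ.2, two_mul]
  have hlen := congrArg Walk.length (Q.take_spec hwQ)
  rw [Walk.length_append, hQ.2] at hlen
  refine Set.mem_insert_of_mem _ (Set.mem_biUnion (List.mem_toFinset.2 hwP)
    (Set.mem_biUnion (x := (Q.takeUntil w hwQ).length) ?_
      ⟨_, ⟨hQ.1.takeUntil hwQ, rfl⟩, _, ⟨hQ.1.dropUntil hwQ, by omega⟩, Q.take_spec hwQ⟩))
  rw [Finset.coe_Ioo, Set.mem_Ioo]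
  refine ⟨Nat.pos_of_ne_zero fun h ↦ hwu (Walk.eq_of_length_eq_zero h).symm, ?_⟩
  simpa [hQ.2] using Walk.length_takeUntil_lt_length hwQ hwv

theorem encard_pathsOfLength_le_of_forall_lt [DecidableEq V] {k : ℕ} {M : ℕ∞}
    (hG : ∀ (x : V) (c : G.Walk x x), c.IsCycle → c.length ≠ 2 * k)
    (hM : ∀ j, 0 < j → j < k → ∀ x y : V, (G.pathsOfLength x y j).encard ≤ M) (u v : V) :
    (G.pathsOfLength u v k).encard ≤ (k + 1) * ((k - 1 : ℕ) * M ^ 2) + 1 := by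
  rcases (G.pathsOfLength u v k).eq_empty_or_nonempty with h | ⟨P, hP⟩
  · simp [h]
  have hsq : ∀ w, ∀ j ∈ Finset.Ioo 0 k, (Set.image2 Walk.append (G.pathsOfLength u w j)
      (G.pathsOfLength w v (k - j))).encard ≤ M ^ 2 := by
    intro w j hj
    rw [Finset.mem_Ioo] at hj
    calc _ ≤ _ := Set.encard_image2_le _ _ _
      _ ≤ M * M := by gcongr <;> exact hM _ (by omega) (by omega) _ _
      _ = M ^ 2 := (sq M).symm
  calc (G.pathsOfLength u v k).encard
      ≤ (⋃ w ∈ P.support.toFinset, ⋃ j ∈ Finset.Ioo 0 k, Set.image2 Walk.append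
          (G.pathsOfLength u w j) (G.pathsOfLength w v (k - j))).encard + 1 :=
        (Set.encard_le_encard (pathsOfLength_subset_insert hP hG)).trans (Set.encard_insert_le _ _)
    _ ≤ (∑ w ∈ P.support.toFinset, ∑ j ∈ Finset.Ioo 0 k, M ^ 2) + 1 := by
        gcongr
        refine (Finset.set_encard_biUnion_le _ _).trans (Finset.sum_le_sum fun w _ ↦ ?_)
        exact (Finset.set_encard_biUnion_le _ _).trans (Finset.sum_le_sum (hsq w))
    _ ≤ (k + 1) * ((k - 1 : ℕ) * M ^ 2) + 1 := by
        have hcard : P.support.toFinset.card ≤ k + 1 := by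
          simpa [hP.2] using P.support.toFinset_card_le
        simp only [Finset.sum_const, Nat.card_Ioo, Nat.sub_zero, nsmul_eq_mul]
        gcongr
        exact_mod_cast hcard

def pathBound : ℕ → ℕ
  | 0 => 1
  | n + 1 => (n + 2) * (n * pathBound n ^ 2) + 1

theorem pathBound_mono : Monotone pathBound := by
  refine monotone_nat_of_le_succ fun n ↦ ?_
  rcases n with _ | n
  · simp [pathBound]
  calc pathBound (n + 1) ≤ pathBound (n + 1) ^ 2 := Nat.le_self_pow two_ne_zero _
    _ ≤ (n + 3) * ((n + 1) * pathBound (n + 1) ^ 2) :=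
        Nat.le_mul_of_pos_left _ (by omega) |>.trans (Nat.le_mul_of_pos_left _ (by omega))
    _ ≤ pathBound (n + 2) := Nat.le_succ _

theorem encard_pathsOfLength_le {ℓ : ℕ} (hG : ∀ j, 2 ≤ j → j ≤ ℓ → (cycleGraph (2 * j)).Free G)
    {k : ℕ} (hk : k ≤ ℓ) (u v : V) : (G.pathsOfLength u v k).encard ≤ pathBound k := by
  classical
  induction k using Nat.strong_induction_on generalizing u v with
  | _ k ih =>
  have hcyc : ∀ (x : V) (c : G.Walk x x), c.IsCycle → c.length ≠ 2 * k :=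
    fun _ _ hc ↦ hc.length_ne_two_mul hG hk
  rcases k with _ | n
  · simpa [pathBound] using encard_pathsOfLength_le_of_forall_lt (M := 0) hcyc (by omega) u v
  · have hM : ∀ j, 0 < j → j < n + 1 → ∀ x y : V,
        (G.pathsOfLength x y j).encard ≤ pathBound n := fun j _ hj x y ↦
      (ih j hj (by omega) x y).trans (by exact_mod_cast pathBound_mono (by omega : j ≤ n))
    convert encard_pathsOfLength_le_of_forall_lt hcyc hM u v using 1
    push_cast [pathBound]
    ring

end SimpleGraph

theorem stmt16_general (ℓ : ℕ) :
    ∃ D : ℕ, ∀ k : ℕ, 1 ≤ k → k ≤ ℓ →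
      ∀ (V : Type) (G : SimpleGraph V),
        (∀ j : ℕ, 2 ≤ j → j ≤ ℓ → ContainsNoCopy (cycleGraph (2 * j)) G) →
        ∀ u v : V, {p : G.Walk u v | p.IsPath ∧ p.length = k}.ncard ≤ D := by
  refine ⟨pathBound ℓ, fun k _ hkℓ V G hG u v ↦ ?_⟩
  have hfree : ∀ j, 2 ≤ j → j ≤ ℓ → (cycleGraph (2 * j)).Free G :=
    fun j hj hjℓ ↦ (hG j hj hjℓ).free
  rw [Set.ncard_def]
  exact ENat.toNat_le_of_le_natCast ((encard_pathsOfLength_le hfree hkℓ u v).trans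
    (by exact_mod_cast pathBound_mono hkℓ))

/-- (Lam–Verstraëte) For every `ℓ ≥ 1` there is a constant `D = D(ℓ)` such that in any
graph with no even cycle of length at most `2ℓ`, for any `1 ≤ k ≤ ℓ` and any vertices
`u, v`, the number of paths of length `k` from `u` to `v` is at most `D`. -/
theorem stmt16 (ℓ : ℕ) (hℓ : 1 ≤ ℓ) :
    ∃ D : ℕ, ∀ k : ℕ, 1 ≤ k → k ≤ ℓ →
      ∀ (V : Type) (G : SimpleGraph V),
        (∀ j : ℕ, 2 ≤ j → j ≤ ℓ → ContainsNoCopy (cycleGraph (2 * j)) G) →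
        ∀ u v : V, {p : G.Walk u v | p.IsPath ∧ p.length = k}.ncard ≤ D :=
  stmt16_general ℓ
end

section
/- For a path P_k of length k (k ≥ 1) and ℓ ≥ 1, the parameter β_ℓ(P_k) equals 1 + ⌊(k+ℓ−1)/(ℓ+1)⌋, where β_ℓ(H) is the maximum number of components in an induced subgraph of H all of whose components are either isolated vertices of degree one in H or paths of length ℓ−1 consisting only of vertices of degree two in H. -/
open SimpleGraph

/-- A valid component for the parameter `β_i(H)`: either a single vertex of degree one
in `H`, or the vertex set of an induced path of length `i - 1` all of whose vertices
have degree two in `H`. -/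
def IsBetaComponent {V : Type*} (H : SimpleGraph V) (i : ℕ) (s : Set V) : Prop :=
  (∃ v : V, s = {v} ∧ (H.neighborSet v).ncard = 1) ∨
  (∃ (a b : V) (p : H.Walk a b), p.IsPath ∧ p.length = i - 1 ∧
    s = {x : V | x ∈ p.support} ∧
    (∀ x ∈ p.support, (H.neighborSet x).ncard = 2) ∧
    (∀ x ∈ p.support, ∀ y ∈ p.support, H.Adj x y → s(x, y) ∈ p.edges))

/-- `β_i(H)`: the maximum number of components of an induced subgraph of `H` all of
whose components are isolated vertices of degree one in `H` or paths of length `i - 1`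
consisting of vertices of degree two in `H`. -/
noncomputable def beta {V : Type*} (H : SimpleGraph V) (i : ℕ) : ℕ :=
  sSup {n | ∃ f : Fin n → Set V,
    (∀ j, IsBetaComponent H i (f j)) ∧
    (∀ j j', j ≠ j' → ∀ x ∈ f j, ∀ y ∈ f j', x ≠ y ∧ ¬ H.Adj x y)}

/-! Since `P_k` is a tree, a path in it is the run of consecutive vertices between its ends, so
the admissible components are the leaves `{0}`, `{k}` and runs of `ℓ` inner vertices. Distinct
components are at distance at least two; shifting all components but `{0}` up by `ℓ - 1`, their
left ends become `ℓ + 1`-separated points of `[0, k + ℓ - 1]`, which bounds their number by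
`1 + ⌊(k + ℓ - 1) / (ℓ + 1)⌋`. The family `{0}`, runs ending at `ℓ + 1, 2(ℓ + 1), …`, `{k}`
attains the bound. -/

theorem Nat.le_div_add_one_of_separated {n m d : ℕ} (hd : 0 < d) (c : Fin n → ℕ)
    (hc : ∀ j, c j ≤ m) (hsep : ∀ j j', j ≠ j' → c j + d ≤ c j' ∨ c j' + d ≤ c j) :
    n ≤ m / d + 1 := by
  classical
  let window : Fin n → Finset ℕ := fun j => Finset.Ico (c j) (c j + d)
  have hdisj : (↑(Finset.univ : Finset (Fin n)) : Set (Fin n)).PairwiseDisjoint window :=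
    fun j _ j' _ hne => Finset.disjoint_left.mpr fun x hx hx' => by
      simp only [window, Finset.mem_Ico] at hx hx'
      rcases hsep j j' hne with h | h <;> omega
  have hsub : Finset.univ.biUnion window ⊆ Finset.range (m + d) := fun x hx => by
    obtain ⟨j, -, hx⟩ := Finset.mem_biUnion.mp hx
    simp only [window, Finset.mem_Ico] at hx
    have := hc j
    exact Finset.mem_range.mpr (by omega)
  have hcount : n * d ≤ m + d :=
    calc n * d = ∑ j, (window j).card := by simp [window]
      _ = (Finset.univ.biUnion window).card := (Finset.card_biUnion hdisj).symm
      _ ≤ m + d := (Finset.card_le_card hsub).trans (Finset.card_range _).le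
  have : n - 1 ≤ m / d := (Nat.le_div_iff_mul_le hd).mpr (by rw [Nat.sub_one_mul]; omega)
  omega

namespace SimpleGraph

theorem IsAcyclic.mem_edges_of_mem_support {V : Type*} {G : SimpleGraph V} (hG : G.IsAcyclic)
    {u v x y : V} (p : G.Walk u v) (hx : x ∈ p.support) (hy : y ∈ p.support) (hxy : G.Adj x y) :
    s(x, y) ∈ p.edges := by
  classical
  have mem_of_walk_through : ∀ {w} (r : G.Walk x w), y ∈ r.support → s(x, y) ∈ r.edges :=
    fun r hr => r.edges_takeUntil_subset_edges hr <|
      isBridge_iff_forall_walk_mem_edges.mp (isAcyclic_iff_forall_adj_isBridge.mp hG hxy) _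
  rw [← p.take_spec hx, Walk.mem_support_append_iff] at hy
  rw [← p.take_spec hx, Walk.edges_append, List.mem_append]
  rcases hy with hy | hy
  · left
    simpa using mem_of_walk_through (p.takeUntil x hx).reverse (by simpa using hy)
  · exact Or.inr (mem_of_walk_through _ hy)

theorem pathGraph_isAcyclic (n : ℕ) : (pathGraph n).IsAcyclic := by
  rw [isAcyclic_iff_forall_adj_isBridge]
  intro u v huv
  wlog h : u.val + 1 = v.val generalizing u v
  · rw [Sym2.eq_swap]
    exact this huv.symm (by rw [pathGraph_adj] at huv; omega)
  rw [isBridge_iff_forall_walk_mem_edges]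
  intro p
  obtain ⟨d, hd, hfst, hsnd⟩ := p.exists_boundary_dart {x | x ≤ u} (by simp) (by simp; omega)
  have hadj := pathGraph_adj.mp d.adj
  simp only [Set.mem_ofPred_eq] at hfst hsnd
  obtain ⟨rfl, rfl⟩ : d.fst = u ∧ d.snd = v := by omega
  exact List.mem_map_of_mem hd

theorem pathGraph_exists_isPath {n : ℕ} (u v : Fin n) (huv : u ≤ v) :
    ∃ p : (pathGraph n).Walk u v, p.IsPath ∧ p.length = v.val - u.val ∧
      ∀ x, x ∈ p.support ↔ u ≤ x ∧ x ≤ v := by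
  induction h : v.val - u.val generalizing v with
  | zero =>
    obtain rfl : u = v := by omega
    exact ⟨.nil, .nil, rfl, fun x => by simp only [Walk.support_nil, List.mem_singleton]; omega⟩
  | succ d ih =>
    obtain ⟨w, hw⟩ : ∃ w : Fin n, w.val + 1 = v.val := ⟨⟨v.val - 1, by omega⟩, by simp; omega⟩
    have hwv : (pathGraph n).Adj w v := pathGraph_adj.mpr (Or.inl hw)
    obtain ⟨p, hp, hlen, hsupp⟩ := ih w (by omega) (by omega)
    refine ⟨p.concat hwv, hp.concat (fun hv => by have := (hsupp v).mp hv; omega) hwv,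
      by rw [Walk.length_concat, hlen], fun x => ?_⟩
    rw [Walk.support_concat, List.mem_append, hsupp, List.mem_singleton]
    omega

theorem ncard_neighborSet_pathGraph {k : ℕ} (v : Fin (k + 1)) :
    ((pathGraph (k + 1)).neighborSet v).ncard =
      (if v.val = 0 then 0 else 1) + (if v.val = k then 0 else 1) := by
  have hsplit : (pathGraph (k + 1)).neighborSet v =
      {w | w.val + 1 = v.val} ∪ {w | v.val + 1 = w.val} := by
    ext w
    simp only [mem_neighborSet, pathGraph_adj, Set.mem_union, Set.mem_ofPred_eq]
    tauto
  rw [hsplit, Set.ncard_union_eq (Set.disjoint_left.mpr fun w h1 h2 => by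
    simp only [Set.mem_ofPred_eq] at h1 h2; omega)]
  congr 1 <;> split_ifs with h
  · convert Set.ncard_empty (Fin (k + 1))
    ext w
    simp only [Set.mem_ofPred_eq, Set.mem_empty_iff_false, iff_false]
    omega
  · exact Set.ncard_eq_one.mpr ⟨⟨v.val - 1, by omega⟩, Set.ext fun w => by
      simp only [Set.mem_ofPred_eq, Set.mem_singleton_iff, Fin.ext_iff]; omega⟩
  · convert Set.ncard_empty (Fin (k + 1))
    ext w
    simp only [Set.mem_ofPred_eq, Set.mem_empty_iff_false, iff_false]
    omega
  · exact Set.ncard_eq_one.mpr ⟨⟨v.val + 1, by omega⟩, Set.ext fun w => by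
      simp only [Set.mem_ofPred_eq, Set.mem_singleton_iff, Fin.ext_iff]; omega⟩

theorem pathGraph_support_of_isPath_of_le {n : ℕ} {u v : Fin n} {p : (pathGraph n).Walk u v}
    (hp : p.IsPath) (huv : u ≤ v) :
    p.length = v.val - u.val ∧ ∀ x, x ∈ p.support ↔ u ≤ x ∧ x ≤ v := by
  obtain ⟨q, hq, hqlen, hqsupp⟩ := pathGraph_exists_isPath u v huv
  obtain rfl : p = q :=
    congrArg Subtype.val (((pathGraph_isAcyclic n).subsingleton_path u v).elim ⟨p, hp⟩ ⟨q, hq⟩)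
  exact ⟨hqlen, hqsupp⟩

theorem pathGraph_exists_Icc_of_isPath {n : ℕ} {u v : Fin n} {p : (pathGraph n).Walk u v}
    (hp : p.IsPath) :
    ∃ a b : Fin n, a ≤ b ∧ p.length = b.val - a.val ∧ ∀ x, x ∈ p.support ↔ a ≤ x ∧ x ≤ b := by
  rcases le_total u v with huv | hvu
  · exact ⟨u, v, huv, pathGraph_support_of_isPath_of_le hp huv⟩
  · obtain ⟨hlen, hsupp⟩ := pathGraph_support_of_isPath_of_le hp.reverse hvu
    refine ⟨v, u, hvu, by rwa [← p.length_reverse], fun x => ?_⟩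
    rw [← hsupp, Walk.support_reverse, List.mem_reverse]

end SimpleGraph

def IsBetaInterval (k ℓ a b : ℕ) : Prop :=
  (a = 0 ∧ b = 0) ∨ (a = k ∧ b = k) ∨ (0 < a ∧ a + ℓ = b + 1 ∧ b < k)

theorem IsBetaInterval.le {k ℓ a b : ℕ} (hℓ : 1 ≤ ℓ) (h : IsBetaInterval k ℓ a b) :
    a ≤ b ∧ b ≤ k := by
  unfold IsBetaInterval at h
  omega

theorem isBetaComponent_pathGraph_iff {k ℓ : ℕ} (hk : 1 ≤ k) (hℓ : 1 ≤ ℓ) {s : Set (Fin (k + 1))} :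
    IsBetaComponent (pathGraph (k + 1)) ℓ s ↔
      ∃ a b, s = Fin.val ⁻¹' Set.Icc a b ∧ IsBetaInterval k ℓ a b := by
  constructor
  · rintro (⟨v, rfl, hv⟩ | ⟨u, w, p, hp, hlen, rfl, hdeg, -⟩)
    · rw [ncard_neighborSet_pathGraph] at hv
      refine ⟨v, v, Set.ext fun x => ?_, ?_⟩
      · simp only [Set.mem_singleton_iff, Set.mem_preimage, Set.mem_Icc]
        omega
      · unfold IsBetaInterval
        split_ifs at hv <;> omega
    · obtain ⟨a, b, hab, hlen', hsupp⟩ := pathGraph_exists_Icc_of_isPath hp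
      have ha := hdeg a ((hsupp a).mpr ⟨le_rfl, hab⟩)
      have hb := hdeg b ((hsupp b).mpr ⟨hab, le_rfl⟩)
      rw [ncard_neighborSet_pathGraph] at ha hb
      refine ⟨a, b, Set.ext fun x => ?_, ?_⟩
      · simp only [Set.mem_ofPred_eq, hsupp, Set.mem_preimage, Set.mem_Icc]
        omega
      · unfold IsBetaInterval
        split_ifs at ha hb <;> omega
  · rintro ⟨a, b, rfl, h⟩
    obtain ⟨hleaf, hba⟩ | ⟨ha, hab, hb⟩ :
        (a = 0 ∨ a = k) ∧ b = a ∨ 0 < a ∧ a + ℓ = b + 1 ∧ b < k := by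
      unfold IsBetaInterval at h; omega
    · refine Or.inl ⟨⟨a, by omega⟩, Set.ext fun x => ?_, ?_⟩
      · simp only [Set.mem_singleton_iff, Set.mem_preimage, Set.mem_Icc, Fin.ext_iff]
        omega
      · rw [ncard_neighborSet_pathGraph, Fin.val_mk]
        split_ifs <;> omega
    · obtain ⟨p, hp, hlen, hsupp⟩ :=
        pathGraph_exists_isPath (⟨a, by omega⟩ : Fin (k + 1)) ⟨b, by omega⟩ (by simp; omega)
      simp only [Fin.le_def] at hlen hsupp
      refine Or.inr ⟨_, _, p, hp, by omega, Set.ext fun x => ?_, fun x hx => ?_,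
        fun x hx y hy hxy => IsAcyclic.mem_edges_of_mem_support (pathGraph_isAcyclic _) p hx hy hxy⟩
      · simp only [Set.mem_ofPred_eq, hsupp, Set.mem_preimage, Set.mem_Icc]
      · have := (hsupp x).mp hx
        rw [ncard_neighborSet_pathGraph]
        split_ifs <;> omega

theorem pathGraph_separated_Icc_iff {k a b a' b' : ℕ} (hab : a ≤ b) (hb : b ≤ k) (hab' : a' ≤ b')
    (hb' : b' ≤ k) :
    (∀ x ∈ (Fin.val ⁻¹' Set.Icc a b : Set (Fin (k + 1))), ∀ y ∈ Fin.val ⁻¹' Set.Icc a' b',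
      x ≠ y ∧ ¬(pathGraph (k + 1)).Adj x y) ↔ b + 2 ≤ a' ∨ b' + 2 ≤ a := by
  simp only [Set.mem_preimage, Set.mem_Icc, pathGraph_adj, ne_eq, Fin.ext_iff]
  constructor
  · intro h
    by_contra! hne
    rcases le_total a a' with h' | h'
    · have := h ⟨min b a', by omega⟩ (by simp only; omega) ⟨a', by omega⟩ (by simp only; omega)
      simp only at this
      omega
    · have := h ⟨a, by omega⟩ (by simp only; omega) ⟨min b' a, by omega⟩ (by simp only; omega)
      simp only at this
      omega
  · intro h x hx y hy
    omega

theorem pathGraph_beta_le {k ℓ n : ℕ} (hk : 1 ≤ k) (hℓ : 1 ≤ ℓ) (f : Fin n → Set (Fin (k + 1)))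
    (hf : ∀ j, IsBetaComponent (pathGraph (k + 1)) ℓ (f j))
    (hsep : ∀ j j', j ≠ j' → ∀ x ∈ f j, ∀ y ∈ f j', x ≠ y ∧ ¬(pathGraph (k + 1)).Adj x y) :
    n ≤ (k + ℓ - 1) / (ℓ + 1) + 1 := by
  choose a b hfj hint using fun j => (isBetaComponent_pathGraph_iff hk hℓ).mp (hf j)
  have hgap : ∀ j j', j ≠ j' → b j + 2 ≤ a j' ∨ b j' + 2 ≤ a j := fun j j' hne => by
    obtain ⟨h1, h2⟩ := (hint j).le hℓ
    obtain ⟨h1', h2'⟩ := (hint j').le hℓ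
    exact (pathGraph_separated_Icc_iff h1 h2 h1' h2').mp (hfj j ▸ hfj j' ▸ hsep j j' hne)
  refine Nat.le_div_add_one_of_separated (c := fun j => if a j = 0 then 0 else a j + ℓ - 1)
    (by omega) (fun j => ?_) (fun j j' hne => ?_)
  · have := (hint j).le hℓ
    split_ifs <;> omega
  · have hj := hint j
    have hj' := hint j'
    unfold IsBetaInterval at hj hj'
    rcases hgap j j' hne with h | h <;> split_ifs <;> omega

theorem pathGraph_exists_beta_family {k ℓ : ℕ} (hk : 1 ≤ k) (hℓ : 1 ≤ ℓ) :
    ∃ f : Fin ((k + ℓ - 1) / (ℓ + 1) + 1) → Set (Fin (k + 1)),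
      (∀ j, IsBetaComponent (pathGraph (k + 1)) ℓ (f j)) ∧
      (∀ j j', j ≠ j' → ∀ x ∈ f j, ∀ y ∈ f j', x ≠ y ∧ ¬(pathGraph (k + 1)).Adj x y) := by
  set q := (k + ℓ - 1) / (ℓ + 1)
  have hq : q * (ℓ + 1) ≤ k + ℓ - 1 := Nat.div_mul_le_self _ _
  have hstep : ∀ i j, i < j → i * (ℓ + 1) + (ℓ + 1) ≤ j * (ℓ + 1) := fun i j h => by
    rw [← Nat.succ_mul]; exact Nat.mul_le_mul_right _ h
  let a : ℕ → ℕ := fun j => if j = q then k else j * (ℓ + 1) + 1 - ℓ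
  let b : ℕ → ℕ := fun j => if j = q then k else j * (ℓ + 1)
  have hint : ∀ j ≤ q, IsBetaInterval k ℓ (a j) (b j) := fun j hj => by
    unfold IsBetaInterval
    simp only [a, b]
    split_ifs with hjq
    · omega
    · rcases Nat.eq_zero_or_pos j with rfl | hpos
      · omega
      · have := hstep 0 j hpos
        have := hstep j q (by omega)
        omega
  have hgap : ∀ i j, i < j → j ≤ q → b i + 2 ≤ a j := fun i j hij hj => by
    have := hstep i j hij
    have := Nat.mul_le_mul_right (ℓ + 1) hj
    simp only [a, b]
    split_ifs <;> omega
  refine ⟨fun j => Fin.val ⁻¹' Set.Icc (a j) (b j),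
    fun j => (isBetaComponent_pathGraph_iff hk hℓ).mpr ⟨_, _, rfl, hint j (by omega)⟩,
    fun j j' hne => ?_⟩
  obtain ⟨h1, h2⟩ := (hint j (by omega)).le hℓ
  obtain ⟨h1', h2'⟩ := (hint j' (by omega)).le hℓ
  refine (pathGraph_separated_Icc_iff h1 h2 h1' h2').mpr ?_
  rcases lt_or_gt_of_ne (Fin.val_ne_of_ne hne) with h | h
  · exact Or.inl (hgap _ _ h (by omega))
  · exact Or.inr (hgap _ _ h (by omega))

/-- For the path `P_k` with `k` edges (`k ≥ 1`) and any `ℓ ≥ 1`,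
`β_ℓ(P_k) = 1 + ⌊(k + ℓ - 1) / (ℓ + 1)⌋`. -/
theorem stmt19 (k ℓ : ℕ) (hk : 1 ≤ k) (hℓ : 1 ≤ ℓ) :
    beta (pathGraph (k + 1)) ℓ = 1 + (k + ℓ - 1) / (ℓ + 1) := by
  rw [add_comm 1]
  refine IsGreatest.csSup_eq ⟨pathGraph_exists_beta_family hk hℓ, ?_⟩
  rintro n ⟨f, hf, hsep⟩
  exact pathGraph_beta_le hk hℓ f hf hsep
end
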